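/- arXiv:1905.00425 — 3 statements merged into one kernel-verified Lean document; each statement's English description precedes it below -/
import Mathlib

section
/- The function φ(t) = t/(e^t - 1) is convex on (0, ∞). -/
open Real Set Filter

private lemma den_pos {t : ℝ} (ht : 0 < t) : 0 < Real.exp t - 1 := by
  linarith [Real.add_one_le_exp t]

private lemma key1 (t : ℝ) : 0 ≤ (t - 1) * Real.exp t + 1 := by
  have h1 : (-t) + 1 ≤ Real.exp (-t) := Real.add_one_le_exp (-t)
  have h2 : Real.exp (-t) * Real.exp t = 1 := by
    rw [← Real.exp_add]; simp
  nlinarith [Real.exp_pos t]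

private lemma hasDerivAt_H (t : ℝ) :
    HasDerivAt (fun s : ℝ => (s - 2) * Real.exp s + s + 2)
      ((t - 1) * Real.exp t + 1) t := by
  have h1 : HasDerivAt (fun s : ℝ => (s - 2) * Real.exp s)
      (1 * Real.exp t + (t - 2) * Real.exp t) t :=
    ((hasDerivAt_id t).sub_const 2).mul (Real.hasDerivAt_exp t)
  have := (h1.add (hasDerivAt_id t)).add_const 2
  refine HasDerivAt.congr_deriv this ?_
  ring

private lemma key2 {t : ℝ} (ht : 0 ≤ t) : 0 ≤ (t - 2) * Real.exp t + t + 2 := by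
  set H : ℝ → ℝ := fun s => (s - 2) * Real.exp s + s + 2 with hH
  have hmono : MonotoneOn H (Set.Ici (0 : ℝ)) := by
    apply monotoneOn_of_deriv_nonneg (convex_Ici 0)
    · exact Continuous.continuousOn (by continuity)
    · intro x hx
      exact (hasDerivAt_H x).differentiableAt.differentiableWithinAt
    · intro x hx
      rw [(hasDerivAt_H x).deriv]
      exact key1 x
  have h0 : H 0 = 0 := by simp [hH]
  have := hmono (Set.self_mem_Ici) ht ht
  rw [h0] at this
  exact this

private lemma hasDerivAt_f {t : ℝ} (ht : 0 < t) :
    HasDerivAt (fun s : ℝ => s / (Real.exp s - 1))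
      (((Real.exp t - 1) - t * Real.exp t) / (Real.exp t - 1) ^ 2) t := by
  have hd : HasDerivAt (fun s : ℝ => Real.exp s - 1) (Real.exp t) t :=
    (Real.hasDerivAt_exp t).sub_const 1
  have := (hasDerivAt_id t).div hd (ne_of_gt (den_pos ht))
  refine HasDerivAt.congr_deriv this ?_
  simp only [id_eq]
  ring

private lemma hasDerivAt_f1 {t : ℝ} (ht : 0 < t) :
    HasDerivAt (fun s : ℝ => ((Real.exp s - 1) - s * Real.exp s) / (Real.exp s - 1) ^ 2)
      (Real.exp t * ((t - 2) * Real.exp t + t + 2) / (Real.exp t - 1) ^ 3) t := by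
  have hd : HasDerivAt (fun s : ℝ => Real.exp s - 1) (Real.exp t) t :=
    (Real.hasDerivAt_exp t).sub_const 1
  have hN : HasDerivAt (fun s : ℝ => (Real.exp s - 1) - s * Real.exp s)
      (Real.exp t - (1 * Real.exp t + t * Real.exp t)) t :=
    hd.sub ((hasDerivAt_id t).mul (Real.hasDerivAt_exp t))
  have hD : HasDerivAt (fun s : ℝ => (Real.exp s - 1) ^ 2)
      (2 * (Real.exp t - 1) ^ 1 * Real.exp t) t := hd.pow 2
  have hDne : (Real.exp t - 1) ^ 2 ≠ 0 := pow_ne_zero 2 (ne_of_gt (den_pos ht))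
  have := hN.div hD hDne
  refine HasDerivAt.congr_deriv this ?_
  have h := den_pos ht
  field_simp
  ring

theorem phi_convex :
    ConvexOn ℝ (Set.Ioi 0) (fun t : ℝ => t / (Real.exp t - 1)) := by
  set f : ℝ → ℝ := fun t => t / (Real.exp t - 1) with hf
  set f1 : ℝ → ℝ := fun t => ((Real.exp t - 1) - t * Real.exp t) / (Real.exp t - 1) ^ 2
    with hf1
  have hderiv : ∀ t ∈ Set.Ioi (0 : ℝ), deriv f t = f1 t := fun t ht =>
    (hasDerivAt_f ht).deriv
  apply convexOn_of_deriv2_nonneg (convex_Ioi 0)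
  · intro x hx
    exact (hasDerivAt_f hx).differentiableAt.continuousAt.continuousWithinAt
  · rw [interior_Ioi]
    intro x hx
    exact (hasDerivAt_f hx).differentiableAt.differentiableWithinAt
  · rw [interior_Ioi]
    intro x hx
    have heq : deriv f =ᶠ[nhds x] f1 :=
      Filter.eventuallyEq_of_mem (Ioi_mem_nhds hx) hderiv
    have : DifferentiableAt ℝ f1 x := (hasDerivAt_f1 hx).differentiableAt
    exact (this.congr_of_eventuallyEq heq).differentiableWithinAt
  · rw [interior_Ioi]
    intro x hx
    have heq : deriv f =ᶠ[nhds x] f1 :=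
      Filter.eventuallyEq_of_mem (Ioi_mem_nhds hx) hderiv
    have h2 : deriv (deriv f) x = deriv f1 x := heq.deriv_eq
    have h3 : deriv f1 x = Real.exp x * ((x - 2) * Real.exp x + x + 2) / (Real.exp x - 1) ^ 3 :=
      (hasDerivAt_f1 hx).deriv
    have : deriv^[2] f x = deriv (deriv f) x := by
      simp [Function.iterate_succ, Function.iterate_one]
    rw [this, h2, h3]
    apply div_nonneg
    · exact mul_nonneg (Real.exp_pos x).le (key2 (le_of_lt hx))
    · exact le_of_lt (pow_pos (den_pos hx) 3)
end

section
/- Let σ > 0 and suppose μᵢ ≥ μᵢ* for all i = 1,…,n. Define f(x) = (d/dx) ∏_{i=1}^n exp(-e^{-(x-μᵢ)/σ}) and g(x) = (d/dx) ∏_{i=1}^n exp(-e^{-(x-μᵢ*)/σ}), the densities of the maxima of n independent Gumbel(μᵢ,σ) and Gumbel(μᵢ*,σ) variables respectively. Then the ratio f(x)/g(x) is increasing in x. -/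
open Real Finset

lemma prod_eq_exp {n : ℕ} (σ : ℝ) (μ : Fin n → ℝ) (y : ℝ) :
    (∏ i, Real.exp (-Real.exp (-(y - μ i) / σ)))
      = Real.exp (-((∑ i, Real.exp (μ i / σ)) * Real.exp (-y / σ))) := by
  rw [← Real.exp_sum]
  congr 1
  rw [Finset.sum_mul, ← Finset.sum_neg_distrib]
  refine Finset.sum_congr rfl fun i _ => ?_
  rw [← Real.exp_add, neg_inj]
  ring

lemma deriv_aux (σ : ℝ) (hσ : 0 < σ) (c x : ℝ) :
    deriv (fun y : ℝ => Real.exp (-(c * Real.exp (-y / σ)))) x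
      = Real.exp (-(c * Real.exp (-x / σ))) * (c * Real.exp (-x / σ) / σ) := by
  have h1 : HasDerivAt (fun y : ℝ => -y / σ) (-1 / σ) x := by
    simpa using ((hasDerivAt_id x).neg.div_const σ)
  have h2 := ((h1.exp.const_mul c).neg).exp
  convert h2.deriv using 1
  · rfl
  · show _ = Real.exp (-(c * Real.exp (-x / σ))) * _
    ring

theorem parallel_lr_order {n : ℕ} (σ : ℝ) (hσ : 0 < σ) (μ μ' : Fin n → ℝ)
    (hμ : ∀ i, μ' i ≤ μ i) :
    Monotone (fun x : ℝ =>
      (deriv (fun y : ℝ => ∏ i, Real.exp (-Real.exp (-(y - μ i) / σ))) x) /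
      (deriv (fun y : ℝ => ∏ i, Real.exp (-Real.exp (-(y - μ' i) / σ))) x)) := by
  set A := ∑ i, Real.exp (μ i / σ) with hA
  set B := ∑ i, Real.exp (μ' i / σ) with hB
  have key : ∀ x : ℝ,
      (deriv (fun y : ℝ => ∏ i, Real.exp (-Real.exp (-(y - μ i) / σ))) x) /
      (deriv (fun y : ℝ => ∏ i, Real.exp (-Real.exp (-(y - μ' i) / σ))) x)
      = (A / B) * Real.exp ((B - A) * Real.exp (-x / σ)) := by
    intro x
    have e1 : (fun y : ℝ => ∏ i, Real.exp (-Real.exp (-(y - μ i) / σ)))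
        = fun y => Real.exp (-(A * Real.exp (-y / σ))) := by
      funext y; exact prod_eq_exp σ μ y
    have e2 : (fun y : ℝ => ∏ i, Real.exp (-Real.exp (-(y - μ' i) / σ)))
        = fun y => Real.exp (-(B * Real.exp (-y / σ))) := by
      funext y; exact prod_eq_exp σ μ' y
    rw [e1, e2, deriv_aux σ hσ A x, deriv_aux σ hσ B x]
    rcases Nat.eq_zero_or_pos n with hn | hn
    · subst hn
      simp [hA, hB]
    · have hApos : 0 < A := Finset.sum_pos (fun i _ => Real.exp_pos _)
        (by simpa using Finset.univ_nonempty_iff.2 ⟨⟨0, hn⟩⟩)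
      have hBpos : 0 < B := Finset.sum_pos (fun i _ => Real.exp_pos _)
        (by simpa using Finset.univ_nonempty_iff.2 ⟨⟨0, hn⟩⟩)
      have hE : (0:ℝ) < Real.exp (-x / σ) := Real.exp_pos _
      have h1 : Real.exp (A * Real.exp (-x / σ)) ≠ 0 := Real.exp_ne_zero _
      have h2 : Real.exp (B * Real.exp (-x / σ)) ≠ 0 := Real.exp_ne_zero _
      have h3 : B ≠ 0 := ne_of_gt hBpos
      have h4 : σ ≠ 0 := ne_of_gt hσ
      have h5 : Real.exp (-x / σ) ≠ 0 := Real.exp_ne_zero _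
      rw [sub_mul, Real.exp_sub, Real.exp_neg, Real.exp_neg]
      field_simp
  have hAB : B ≤ A := Finset.sum_le_sum fun i _ =>
    Real.exp_le_exp.2 (by gcongr; exact hμ i)
  have hBnn : 0 ≤ B := Finset.sum_nonneg fun i _ => (Real.exp_pos _).le
  intro a b hab
  simp only [key]
  apply mul_le_mul_of_nonneg_left _ (div_nonneg (hBnn.trans hAB) hBnn)
  apply Real.exp_le_exp.2
  apply mul_le_mul_of_nonpos_left _ (by linarith)
  exact Real.exp_le_exp.2 (by gcongr)
end

section
/- Let σ > 0 and suppose μᵢ ≥ μᵢ* for all i. Then for every x ∈ ℝ, ∑_{i=1}^n (e^{-(x-μᵢ)/σ} - e^{-(x-μᵢ*)/σ}) ≥ 0, and consequently the derivative of the likelihood ratio f_{X_{n:n}}(x)/f_{Y_{n:n}}(x) of the two parallel-system densities is nonnegative for all x. -/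
theorem lr_deriv_nonneg {n : ℕ} (σ : ℝ) (hσ : 0 < σ) (μ μ' : Fin n → ℝ)
    (hμ : ∀ i, μ' i ≤ μ i) :
    (∀ x : ℝ, 0 ≤ ∑ i, (Real.exp (-(x - μ i) / σ) - Real.exp (-(x - μ' i) / σ))) ∧
    ∀ x : ℝ, 0 ≤ deriv (fun y : ℝ =>
      ((1 / σ) * (∏ i, Real.exp (-Real.exp (-(y - μ i) / σ))) *
        ∑ i, Real.exp (-(y - μ i) / σ)) /
      ((1 / σ) * (∏ i, Real.exp (-Real.exp (-(y - μ' i) / σ))) *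
        ∑ i, Real.exp (-(y - μ' i) / σ))) x := by
  constructor
  · intro x
    apply Finset.sum_nonneg
    intro i _
    rw [sub_nonneg]
    apply Real.exp_le_exp.2
    apply div_le_div_of_nonneg_right ?_ hσ.le
    linarith [hμ i]
  · -- rewrite the function in closed form
    set A : ℝ := ∑ i, Real.exp (μ i / σ) with hA
    set B : ℝ := ∑ i, Real.exp (μ' i / σ) with hB
    have hA0 : 0 ≤ A := Finset.sum_nonneg fun i _ => (Real.exp_pos _).le
    have hB0 : 0 ≤ B := Finset.sum_nonneg fun i _ => (Real.exp_pos _).le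
    have hBA : B ≤ A := by
      apply Finset.sum_le_sum
      intro i _
      exact Real.exp_le_exp.2 (div_le_div_of_nonneg_right (hμ i) hσ.le)
    have hexp : ∀ (y m : ℝ), Real.exp (-(y - m) / σ) =
        Real.exp (m / σ) * Real.exp (-y / σ) := by
      intro y m
      rw [← Real.exp_add]
      congr 1
      field_simp
      ring
    have hsum : ∀ (y : ℝ) (ν : Fin n → ℝ),
        (∑ i, Real.exp (-(y - ν i) / σ)) =
        (∑ i, Real.exp (ν i / σ)) * Real.exp (-y / σ) := by
      intro y ν
      rw [Finset.sum_mul]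
      exact Finset.sum_congr rfl fun i _ => hexp y (ν i)
    have hprod : ∀ (y : ℝ) (ν : Fin n → ℝ),
        (∏ i, Real.exp (-Real.exp (-(y - ν i) / σ))) =
        Real.exp (-((∑ i, Real.exp (ν i / σ)) * Real.exp (-y / σ))) := by
      intro y ν
      rw [← Real.exp_sum]
      congr 1
      rw [← hsum y ν, Finset.sum_neg_distrib]
    have hfun : (fun y : ℝ =>
        ((1 / σ) * (∏ i, Real.exp (-Real.exp (-(y - μ i) / σ))) *
          ∑ i, Real.exp (-(y - μ i) / σ)) /
        ((1 / σ) * (∏ i, Real.exp (-Real.exp (-(y - μ' i) / σ))) *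
          ∑ i, Real.exp (-(y - μ' i) / σ)))
        = fun y : ℝ => (A / B) * Real.exp ((B - A) * Real.exp (-y / σ)) := by
      funext y
      rw [hsum y μ, hsum y μ', hprod y μ, hprod y μ', ← hA, ← hB]
      set t : ℝ := Real.exp (-y / σ) with ht
      have ht0 : 0 < t := Real.exp_pos _
      rcases eq_or_lt_of_le hB0 with hBz | hBpos
      · have hAz : A = 0 := by
          have hn : n = 0 := by
            by_contra hn
            have : 0 < B := by
              rw [hB]
              apply Finset.sum_pos (fun i _ => Real.exp_pos _)
              simp [Finset.univ_nonempty_iff, ← Fin.pos_iff_nonempty,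
                Nat.pos_of_ne_zero hn]
            linarith [hBz]
          subst hn
          simp [hA]
        rw [hAz, ← hBz]
        simp
      · have hden : (1 / σ) * Real.exp (-(B * t)) * (B * t) ≠ 0 := by
          positivity
        rw [div_eq_iff hden]
        have hBne : B ≠ 0 := ne_of_gt hBpos
        rw [show (-(A * t)) = (B - A) * t + -(B * t) by ring, Real.exp_add]
        field_simp
    rw [hfun]
    intro x
    have hd : HasDerivAt (fun y : ℝ => (A / B) * Real.exp ((B - A) * Real.exp (-y / σ)))
        ((A / B) * (Real.exp ((B - A) * Real.exp (-x / σ)) *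
          ((B - A) * (Real.exp (-x / σ) * (-1 / σ))))) x := by
      have h1 : HasDerivAt (fun y : ℝ => -y / σ) (-1 / σ) x :=
        (hasDerivAt_id x).neg.div_const σ
      have h2 := h1.exp
      have h3 := h2.const_mul (B - A)
      have h4 := h3.exp
      exact h4.const_mul (A / B)
    rw [hd.deriv]
    have key : (A / B) * (Real.exp ((B - A) * Real.exp (-x / σ)) *
          ((B - A) * (Real.exp (-x / σ) * (-1 / σ))))
        = (A / B) * Real.exp ((B - A) * Real.exp (-x / σ)) *
          Real.exp (-x / σ) * (A - B) / σ := by ring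
    rw [key]
    apply div_nonneg _ hσ.le
    apply mul_nonneg _ (by linarith)
    apply mul_nonneg _ (Real.exp_pos _).le
    exact mul_nonneg (div_nonneg hA0 hB0) (Real.exp_pos _).le
end
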